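/- arXiv:2412.08492 — 2 statements merged into one kernel-verified Lean document; each statement's English description precedes it below -/
import Mathlib

section
/- (Parity Lemma) In an edge-to-edge tiling of the sphere by congruent a⁴b-pentagons, at every vertex the total number of angles from {δ, ε} is even. -/
open Finset

/-- Modulo 2 each change of label contributes `f x + f (e x)`, and reindexing by `e` makes the
two resulting sums equal. -/
theorem even_card_filter_ne_comp_equiv {α : Type*} [Fintype α] (f : α → Bool) (e : α ≃ α) :
    Even #{x | f x ≠ f (e x)} := by
  let g : α → ZMod 2 := fun x => (f x).toNat
  have hchange : ∀ x, ((if f x ≠ f (e x) then 1 else 0 : ℕ) : ZMod 2) = g x + g (e x) := by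
    intro x
    simp only [g]
    cases f x <;> cases f (e x) <;> decide
  rw [← ZMod.natCast_eq_zero_iff_even, card_filter, Nat.cast_sum]
  calc ∑ x, ((if f x ≠ f (e x) then 1 else 0 : ℕ) : ZMod 2)
      = ∑ x, g x + ∑ x, g (e x) := by simp only [hchange, sum_add_distrib]
    _ = 2 * ∑ x, g x := by rw [e.sum_comp, two_mul]
    _ = 0 := by rw [show (2 : ZMod 2) = 0 from rfl, zero_mul]

/-- The `i`-th tile at a vertex of degree `n` has a left edge `l i` and a right edge `r i`
(`true` = a `b`-edge); edge-to-edge matching is `r i = l (i + 1)`, and the angle of tile `i`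
is a `δ`/`ε`-angle exactly when `l i ≠ r i`. -/
theorem stmt4_general (n : ℕ) [NeZero n] (l r : ZMod n → Bool)
    (hmatch : ∀ i, r i = l (i + 1)) :
    Even (Finset.univ.filter (fun i : ZMod n => l i ≠ r i)).card := by
  simp_rw [hmatch]
  exact even_card_filter_ne_comp_equiv l (Equiv.addRight 1)

/-- (Parity Lemma) Around a vertex of degree `n` in an edge-to-edge tiling by `a⁴b`-pentagons,
the `i`-th tile has two edges at the vertex, a left edge `l i` and a right edge `r i`
(`true` = a `b`-edge, `false` = an `a`-edge); edge-to-edge matching means `r i = l (i+1)`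
cyclically.  The angle of tile `i` is a `δ`/`ε`-angle exactly when one of its two flanking
edges is the `b`-edge, i.e. when `l i ≠ r i` (the pentagon has no angle between two
`b`-edges, so never `l i = r i = true`).  Then the total number of angles from `{δ, ε}`
at the vertex is even. -/
theorem stmt4 (n : ℕ) [NeZero n] (l r : ZMod n → Bool)
    (hmatch : ∀ i, r i = l (i + 1))
    (hnobb : ∀ i, ¬(l i = true ∧ r i = true)) :
    Even (Finset.univ.filter (fun i : ZMod n => l i ≠ r i)).card :=
  stmt4_general n l r hmatch
end

section
/- In an edge-to-edge tiling of the sphere by congruent a⁴b-pentagons (with all vertices of degree ≥ 3), both an a³-vertex and an a²b-vertex must occur. -/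
/-- In an edge-to-edge tiling of the sphere by `f` congruent `a⁴b`-pentagons (all vertices of
degree ≥ 3), both an `a³`-vertex and an `a²b`-vertex occur.  Here `dec v` counts the angles
from `{δ, ε}` at vertex `v`; every degree-3 vertex is an `a³`-vertex (degree 3, no `δ`/`ε`)
or an `a²b`-vertex (degree 3, exactly two angles from `{δ, ε}`, hence `2 ≤ dec`);
the total `δ`/`ε` count is `2f`; the number of degree-3 vertices is at least `f + 8`;
and (by the special-tile lemma) some degree-3 vertex carries a `δ` or `ε` angle. -/
theorem stmt17 (V : Type*) (f : ℕ) [Fintype V] (deg dec : V → ℕ)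
    (isA3 isA2B : V → Prop)
    (hclass : ∀ v, deg v = 3 → isA3 v ∨ isA2B v)
    (hA3 : ∀ v, isA3 v → deg v = 3 ∧ dec v = 0)
    (hA2B : ∀ v, isA2B v → deg v = 3 ∧ 2 ≤ dec v)
    (htotal : ∑ v, dec v = 2 * f)
    (hv3 : f + 8 ≤ (Finset.univ.filter (fun v => deg v = 3)).card)
    (hspecial : ∃ v, deg v = 3 ∧ 1 ≤ dec v) :
    (∃ v, isA3 v) ∧ (∃ v, isA2B v) := by
  obtain ⟨w, hw3, hwdec⟩ := hspecial
  have hwA2B : isA2B w := by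
    rcases hclass w hw3 with h | h
    · have := (hA3 w h).2; omega
    · exact h
  refine ⟨?_, ⟨w, hwA2B⟩⟩
  by_contra hno
  push_neg at hno
  have hkey : ∀ v ∈ Finset.univ.filter (fun v => deg v = 3), 2 ≤ dec v := by
    intro v hv
    simp only [Finset.mem_filter] at hv
    rcases hclass v hv.2 with h | h
    · exact absurd h (hno v)
    · exact (hA2B v h).2
  have h1 : 2 * (f + 8) ≤ ∑ v ∈ Finset.univ.filter (fun v => deg v = 3), dec v := by
    calc 2 * (f + 8) ≤ 2 * (Finset.univ.filter (fun v => deg v = 3)).card := by omega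
    _ = ∑ _v ∈ Finset.univ.filter (fun v => deg v = 3), 2 := by
        rw [Finset.sum_const]; ring
    _ ≤ _ := Finset.sum_le_sum hkey
  have h2 : ∑ v ∈ Finset.univ.filter (fun v => deg v = 3), dec v ≤ ∑ v, dec v :=
    Finset.sum_le_sum_of_subset (Finset.filter_subset _ _)
  omega
end
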